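/- Under the hypotheses of the quotient construction (R induced by full row rank C ∈ L^{Ñ×N}, invariance (a,b)∈R ⟹ (F⋉u⋉a, F⋉u⋉b)∈R for all u), let Σ_R be the Boolean system x_R(t+1) = F̃⋉u(t)⋉x_R(t) where F̃ = [F̃_1 … F̃_M] with F̃_k = C ⊙ (F⋉δ_M^k) ⊙ C^T. Then: if input u ∈ Δ_M steers Σ from state a to state a' in one step, the same u steers Σ_R from Ca to Ca' in one step; conversely, if u steers Σ_R from q to q' in one step, then there exist a, a' ∈ Δ_N with Ca = q, Ca' = q', and u steers Σ from a to a' in one step. -/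

import Mathlib

open Matrix

noncomputable section
open scoped Classical

/-- The `i`-th canonical basis vector of length `N`. -/
def canon {N : ℕ} (i : Fin N) : Fin N → ℝ := Pi.single i 1

/-- `Delta N` is the set of canonical basis vectors of length `N`. -/
def Delta (N : ℕ) : Set (Fin N → ℝ) := {v | ∃ i, v = canon i}

/-- A logical matrix: every column is a canonical basis vector. -/
def IsLogical {m : ℕ} {J : Type*} (A : Matrix (Fin m) J ℝ) : Prop :=
  ∀ j : J, ∃ i : Fin m, (fun r => A r j) = canon i

/-- Full row rank for a logical matrix: every canonical vector occurs among the columns. -/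
def FullRowRank {m : ℕ} {J : Type*} (A : Matrix (Fin m) J ℝ) : Prop :=
  ∀ i : Fin m, ∃ j : J, (fun r => A r j) = canon i

/-- Semitensor product `F ⋉ u ⋉ x` for a BCN matrix `F ∈ L^{N×NM}`:
`F` times the Kronecker product `u ⊗ x`. -/
def stp {N M : ℕ} (F : Matrix (Fin N) (Fin M × Fin N) ℝ)
    (u : Fin M → ℝ) (x : Fin N → ℝ) : Fin N → ℝ :=
  F.mulVec (fun p => u p.1 * x p.2)

/-- Boolean product of (0,1)-matrices: `(A ⊙ B) i k = ⋁ j, A i j ∧ B j k`. -/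
def boolProd {I J K : Type*} (A : Matrix I J ℝ) (B : Matrix J K ℝ) : Matrix I K ℝ :=
  fun i k => if ∃ j, A i j = 1 ∧ B j k = 1 then 1 else 0

/-- The `N×N` block `F_k = F ⋉ δ_M^k` of `F`. -/
def blockOf {N M : ℕ} (F : Matrix (Fin N) (Fin M × Fin N) ℝ) (k : Fin M) :
    Matrix (Fin N) (Fin N) ℝ :=
  fun r s => F r (k, s)

/-- The matrix `F̃ = [F̃_1 … F̃_M]` of the quotient system, `F̃_k = C ⊙ F_k ⊙ Cᵀ`. -/
def quotMat {N M Nt : ℕ} (F : Matrix (Fin N) (Fin M × Fin N) ℝ)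
    (C : Matrix (Fin Nt) (Fin N) ℝ) : Matrix (Fin Nt) (Fin M × Fin Nt) ℝ :=
  fun i p => boolProd (boolProd C (blockOf F p.1)) Cᵀ i p.2


/-!
A logical matrix is the same thing as a map on indices: column `j` of `A` is `canon (a j)`.
Writing `f` for the map of `F` (so `Σ` moves `δ_N^s` to `δ_N^{f(k,s)}` under input `δ_M^k`) and `c`
for the map of `C`, the column of `F̃` at `(k, c s)` is the indicator of the set
`{c (f (k, s')) | c s' = c s}`. Invariance of `R` says exactly that this set is the single point
`c (f (k, s))`, so `Σ_R` is the map induced by `f` on the classes of `c`; full row rank makes `c`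
surjective, which lets every transition of `Σ_R` be lifted.
-/

lemma canon_apply_eq_one_iff {N : ℕ} {i r : Fin N} : canon i r = 1 ↔ r = i := by
  by_cases h : r = i <;> simp [canon, h]

lemma canon_injective {N : ℕ} : Function.Injective (canon : Fin N → Fin N → ℝ) :=
  fun _ _ hij => canon_apply_eq_one_iff.mp (hij ▸ canon_apply_eq_one_iff.mpr rfl)

lemma mulVec_canon {m N : ℕ} (A : Matrix (Fin m) (Fin N) ℝ) (j : Fin N) :
    A *ᵥ canon j = fun i => A i j :=
  mulVec_single_one A j

lemma stp_canon {N M : ℕ} (F : Matrix (Fin N) (Fin M × Fin N) ℝ) (k : Fin M) (s : Fin N) :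
    stp F (canon k) (canon s) = fun r => F r (k, s) := by
  have hprod : (fun p : Fin M × Fin N => canon k p.1 * canon s p.2) = Pi.single (k, s) 1 := by
    ext ⟨k', s'⟩
    by_cases hk : k' = k <;> by_cases hs : s' = s <;> simp [canon, hk, hs]
  rw [stp, hprod, mulVec_single_one]
  rfl

section ColumnMaps

variable {m n : ℕ} {J K : Type*}

lemma entry_eq_one_iff_of_cols {A : Matrix (Fin m) J ℝ} {a : J → Fin m}
    (hA : ∀ j, (fun r => A r j) = canon (a j)) {i : Fin m} {j : J} :
    A i j = 1 ↔ i = a j := by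
  rw [show A i j = canon (a j) i from congrFun (hA j) i, canon_apply_eq_one_iff]

lemma boolProd_col_eq_canon {A : Matrix (Fin m) J ℝ} {B : Matrix J K ℝ} {k : K} {i : Fin m}
    (h : ∀ r, (∃ j, A r j = 1 ∧ B j k = 1) ↔ r = i) :
    (fun r => boolProd A B r k) = canon i := by
  ext r
  by_cases hr : r = i <;> simp [boolProd, canon, h, hr]

lemma boolProd_cols {A : Matrix (Fin m) (Fin n) ℝ} {B : Matrix (Fin n) K ℝ}
    {a : Fin n → Fin m} {b : K → Fin n}
    (hA : ∀ j, (fun r => A r j) = canon (a j)) (hB : ∀ k, (fun r => B r k) = canon (b k)) (k : K) :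
    (fun r => boolProd A B r k) = canon (a (b k)) :=
  boolProd_col_eq_canon fun r => by
    simp only [entry_eq_one_iff_of_cols hA, entry_eq_one_iff_of_cols hB, exists_eq_right]

lemma boolProd_transpose_cols {A : Matrix (Fin m) J ℝ} {C : Matrix (Fin n) J ℝ}
    {g : J → Fin m} {c : J → Fin n}
    (hA : ∀ s, (fun r => A r s) = canon (g s)) (hC : ∀ j, (fun r => C r j) = canon (c j))
    (hg : ∀ s s', c s = c s' → g s = g s') (s : J) :
    (fun r => boolProd A Cᵀ r (c s)) = canon (g s) :=
  boolProd_col_eq_canon fun r => by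
    simp only [transpose_apply, entry_eq_one_iff_of_cols hA, entry_eq_one_iff_of_cols hC]
    constructor
    · rintro ⟨s', rfl, hs'⟩
      exact hg s' s hs'.symm
    · rintro rfl
      exact ⟨s, rfl, rfl⟩

end ColumnMaps

section Quotient

variable {N M Nt : ℕ} {F : Matrix (Fin N) (Fin M × Fin N) ℝ} {C : Matrix (Fin Nt) (Fin N) ℝ}
  {f : Fin M × Fin N → Fin N} {c : Fin N → Fin Nt}

lemma mulVec_canon_of_cols (hc : ∀ j, (fun r => C r j) = canon (c j)) (j : Fin N) :
    C *ᵥ canon j = canon (c j) :=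
  (mulVec_canon C j).trans (hc j)

lemma stp_canon_of_cols (hf : ∀ p, (fun r => F r p) = canon (f p)) (k : Fin M) (s : Fin N) :
    stp F (canon k) (canon s) = canon (f (k, s)) :=
  (stp_canon F k s).trans (hf (k, s))

lemma stp_quotMat_canon (hf : ∀ p, (fun r => F r p) = canon (f p))
    (hc : ∀ j, (fun r => C r j) = canon (c j))
    (hcompat : ∀ k s s', c s = c s' → c (f (k, s)) = c (f (k, s'))) (k : Fin M) (s : Fin N) :
    stp (quotMat F C) (canon k) (canon (c s)) = canon (c (f (k, s))) :=
  (stp_canon _ k (c s)).trans <|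
    boolProd_transpose_cols (boolProd_cols hc fun s => hf (k, s)) hc (hcompat k) s

end Quotient

/-- one-step transition correspondence between `Σ` and its quotient `Σ_R`. -/
theorem stmt4 {N M Nt : ℕ} (F : Matrix (Fin N) (Fin M × Fin N) ℝ) (hF : IsLogical F)
    (C : Matrix (Fin Nt) (Fin N) ℝ) (hC : IsLogical C) (hfrr : FullRowRank C)
    (hinv : ∀ a ∈ Delta N, ∀ b ∈ Delta N, C.mulVec a = C.mulVec b →
      ∀ u ∈ Delta M, C.mulVec (stp F u a) = C.mulVec (stp F u b)) :
    (∀ u ∈ Delta M, ∀ a ∈ Delta N, ∀ a' ∈ Delta N, a' = stp F u a →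
        C.mulVec a' = stp (quotMat F C) u (C.mulVec a)) ∧
    (∀ u ∈ Delta M, ∀ q ∈ Delta Nt, ∀ q' ∈ Delta Nt, q' = stp (quotMat F C) u q →
        ∃ a ∈ Delta N, ∃ a' ∈ Delta N,
          C.mulVec a = q ∧ C.mulVec a' = q' ∧ a' = stp F u a) := by
  choose f hf using hF
  choose c hc using hC
  have hCc := mulVec_canon_of_cols hc
  have hFc := stp_canon_of_cols hf
  have hcompat : ∀ k s s', c s = c s' → c (f (k, s)) = c (f (k, s')) := fun k s s' hss' =>
    canon_injective <| by
      simpa only [hFc, hCc] using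
        hinv _ ⟨s, rfl⟩ _ ⟨s', rfl⟩ (by rw [hCc, hCc, hss']) _ ⟨k, rfl⟩
  have hQ := stp_quotMat_canon hf hc hcompat
  constructor
  · rintro u ⟨k, rfl⟩ a ⟨s, rfl⟩ a' - rfl
    rw [hFc, hCc, hCc, hQ]
  · rintro u ⟨k, rfl⟩ q ⟨p, rfl⟩ q' - rfl
    obtain ⟨s, hs⟩ := hfrr p
    obtain rfl : c s = p := canon_injective ((hc s).symm.trans hs)
    exact ⟨canon s, ⟨s, rfl⟩, _, ⟨f (k, s), rfl⟩, hCc s, by rw [hCc, hQ], (hFc k s).symm⟩
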